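/- The bilinear, antisymmetric bracket on ℝ⁷ determined on the standard basis e₁,…,e₇ by [e₁,e₂] = (a/2)e₇, [e₁,e₃] = −(a/2)e₅, [e₁,e₄] = −a·e₆, [e₁,e₅] = (a/2)e₃, [e₁,e₆] = a·e₄, [e₁,e₇] = −(a/2)e₂, [e₂,e₄] = (a/2)e₅, [e₂,e₆] = −(a/2)e₃, [e₃,e₄] = (a/2)e₇, [e₃,e₆] = (a/2)e₂, [e₄,e₅] = (a/2)e₂, [e₄,e₆] = −a·e₁, [e₄,e₇] = (a/2)e₃, [e₅,e₆] = (a/2)e₇, [e₆,e₇] = (a/2)e₅ (all other brackets of basis vectors zero, extended by antisymmetry) satisfies the Jacobi identity, and hence makes ℝ⁷ a real Lie algebra 𝔤ₐ. -/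
import Mathlib


noncomputable section
set_option maxHeartbeats 4000000

/-- The standard basis vectors `e₁, …, e₇` of `ℝ⁷` (0-indexed). -/
def e (k : Fin 7) : Fin 7 → ℝ := Pi.single k 1

/-- The table of brackets `[eᵢ, eⱼ]` of the Lie algebra `𝔤ₐ`, as listed in the statement
(extended by antisymmetry, all other brackets of basis vectors zero). -/
def braTable (a : ℝ) : Fin 7 → Fin 7 → Fin 7 → ℝ :=
  ![![0, (a/2) • e 6, (-(a/2)) • e 4, (-a) • e 5, (a/2) • e 2, a • e 3, (-(a/2)) • e 1],
    ![(-(a/2)) • e 6, 0, 0, (a/2) • e 4, 0, (-(a/2)) • e 2, 0],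
    ![(a/2) • e 4, 0, 0, (a/2) • e 6, 0, (a/2) • e 1, 0],
    ![a • e 5, (-(a/2)) • e 4, (-(a/2)) • e 6, 0, (a/2) • e 1, (-a) • e 0, (a/2) • e 2],
    ![(-(a/2)) • e 2, 0, 0, (-(a/2)) • e 1, 0, (a/2) • e 6, 0],
    ![(-a) • e 3, (a/2) • e 2, (-(a/2)) • e 1, a • e 0, (-(a/2)) • e 6, 0, (a/2) • e 4],
    ![(a/2) • e 1, 0, 0, (-(a/2)) • e 2, 0, (-(a/2)) • e 4, 0]]

/-- The bilinear bracket on `ℝ⁷` determined by `braTable` on the standard basis. -/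
def bra (a : ℝ) (x y : Fin 7 → ℝ) : Fin 7 → ℝ :=
  ∑ i : Fin 7, ∑ j : Fin 7, (x i * y j) • braTable a i j

lemma cv5 {α : Type*} (x : α) (u : Fin 6 → α) : Matrix.vecCons x u (5:Fin 7) = u 4 := rfl
lemma cv6 {α : Type*} (x : α) (u : Fin 6 → α) : Matrix.vecCons x u (6:Fin 7) = u 5 := rfl
lemma cw5 {α : Type*} (x : α) (u : Fin 5 → α) : Matrix.vecCons x u (5:Fin 6) = u 4 := rfl

/-- Explicit componentwise formula for the bracket. -/
def braFun (a : ℝ) (x y : Fin 7 → ℝ) : Fin 7 → ℝ :=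
  ![ -a*(x 3*y 5 - x 5*y 3),
     -(a/2)*(x 0*y 6 - x 6*y 0) + (a/2)*(x 2*y 5 - x 5*y 2) + (a/2)*(x 3*y 4 - x 4*y 3),
     (a/2)*(x 0*y 4 - x 4*y 0) - (a/2)*(x 1*y 5 - x 5*y 1) + (a/2)*(x 3*y 6 - x 6*y 3),
     a*(x 0*y 5 - x 5*y 0),
     -(a/2)*(x 0*y 2 - x 2*y 0) + (a/2)*(x 1*y 3 - x 3*y 1) + (a/2)*(x 5*y 6 - x 6*y 5),
     -a*(x 0*y 3 - x 3*y 0),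
     (a/2)*(x 0*y 1 - x 1*y 0) + (a/2)*(x 2*y 3 - x 3*y 2) + (a/2)*(x 4*y 5 - x 5*y 4)]

theorem bra_eq (a : ℝ) (x y : Fin 7 → ℝ) : bra a x y = braFun a x y := by
  funext k
  fin_cases k <;>
  · simp [bra, braTable, braFun, e, Fin.sum_univ_seven, Pi.single_apply, cv5, cv6, cw5,
      Matrix.vecHead, Matrix.vecTail]
    ring

lemma bra_basis (a : ℝ) (i j : Fin 7) : bra a (e i) (e j) = braTable a i j := by
  simp [bra, e, Pi.single_apply, ite_smul, zero_smul, mul_ite, ite_mul, mul_one, mul_zero,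
    zero_mul, Finset.sum_ite_eq, Finset.sum_ite_eq']

/-- the bracket `bra a` is bilinear, takes the prescribed values on the
standard basis, is antisymmetric, and satisfies the Jacobi identity; hence it makes
`ℝ⁷` a real Lie algebra `𝔤ₐ`. -/
theorem bra_bilinear_antisymm_jacobi (a : ℝ) :
    (∀ (x x' y : Fin 7 → ℝ) (c : ℝ),
      bra a (x + x') y = bra a x y + bra a x' y ∧ bra a (c • x) y = c • bra a x y) ∧
    (∀ (x y y' : Fin 7 → ℝ) (c : ℝ),
      bra a x (y + y') = bra a x y + bra a x y' ∧ bra a x (c • y) = c • bra a x y) ∧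
    (∀ i j : Fin 7, bra a (e i) (e j) = braTable a i j) ∧
    (∀ x y : Fin 7 → ℝ, bra a x y = - bra a y x) ∧
    (∀ x y z : Fin 7 → ℝ,
      bra a x (bra a y z) + bra a y (bra a z x) + bra a z (bra a x y) = 0) := by
  refine ⟨?_, ?_, fun i j => bra_basis a i j, ?_, ?_⟩
  · intro x x' y c
    constructor <;>
    · simp only [bra_eq]
      funext k
      fin_cases k <;>
      · simp [braFun, cv5, cv6, cw5]
        ring
  · intro x y y' c
    constructor <;>
    · simp only [bra_eq]
      funext k
      fin_cases k <;>
      · simp [braFun, cv5, cv6, cw5]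
        ring
  · intro x y
    simp only [bra_eq]
    funext k
    fin_cases k <;>
    · simp [braFun, cv5, cv6, cw5]
      ring
  · intro x y z
    simp only [bra_eq]
    funext k
    fin_cases k <;>
    · simp [braFun, cv5, cv6, cw5]
      ring
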